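/- arXiv:2512.10892 — 2 statements merged into one kernel-verified Lean document; each statement's English description precedes it below -/
import Mathlib

section
/- Fix m ≥ 1, constants 0 < l < 1 and 0 < μ_l ≤ 1 with l/m < 1/m < 2/(m·μ_l). Let v̄ ∈ R^m be nonnegative. Then the convex optimization problem: minimize ∑_j −v̄_j · log(b_j) subject to ∑_j b_j = 1 and l/m ≤ b_j ≤ 2/(m·μ_l) for all j, has the following property: if b*_j = min(max(s·v̄_j, l/m), 2/(m·μ_l)) for some s > 0 with ∑_j b*_j = 1, then b* is an optimal solution. -/
open Real Finset

/-- Optimality of the projected-and-scaled bids for the convex program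
`min ∑_j −v̄_j log b_j` subject to `∑_j b_j = 1`, `l/m ≤ b_j ≤ 2/(m·μ_l)`. -/
theorem projected_bids_optimal (m : ℕ) (hm : 1 ≤ m)
    (l μl : ℝ) (hl0 : 0 < l) (hl1 : l < 1) (hμ0 : 0 < μl) (hμ1 : μl ≤ 1)
    (hchain : l / m < 1 / m ∧ (1 : ℝ) / m < 2 / (m * μl))
    (vbar : Fin m → ℝ) (hv0 : ∀ j, 0 ≤ vbar j)
    (s : ℝ) (hs : 0 < s)
    (bstar : Fin m → ℝ)
    (hbstar : ∀ j, bstar j = min (max (s * vbar j) (l / m)) (2 / (m * μl)))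
    (hsum : ∑ j, bstar j = 1) :
    ∀ b : Fin m → ℝ, (∑ j, b j = 1) →
      (∀ j, l / m ≤ b j ∧ b j ≤ 2 / (m * μl)) →
      ∑ j, -(vbar j * Real.log (bstar j)) ≤ ∑ j, -(vbar j * Real.log (b j)) := by
  intro b hbsum hbc
  have hm0 : (0:ℝ) < m := by exact_mod_cast Nat.lt_of_lt_of_le Nat.zero_lt_one hm
  have hL0 : 0 < l / m := div_pos hl0 hm0
  have hLU : l / m < 2 / (m * μl) := hchain.1.trans hchain.2
  have hbspos : ∀ j, 0 < bstar j := by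
    intro j
    rw [hbstar j]
    exact lt_min (lt_of_lt_of_le hL0 (le_max_right _ _)) (hL0.trans hLU)
  have hbpos : ∀ j, 0 < b j := fun j => hL0.trans_le (hbc j).1
  -- pointwise key inequality
  have key : ∀ j, vbar j * (Real.log (b j) - Real.log (bstar j))
      ≤ (1/s) * (b j - bstar j) := by
    intro j
    have h1 : vbar j * (Real.log (b j) - Real.log (bstar j))
        ≤ vbar j / bstar j * (b j - bstar j) := by
      rcases eq_or_lt_of_le (hv0 j) with h | h
      · rw [← h]; simp
      · have hlog : Real.log (b j) - Real.log (bstar j) ≤ (b j - bstar j) / bstar j := by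
          have := Real.log_le_sub_one_of_pos (div_pos (hbpos j) (hbspos j))
          rw [Real.log_div (hbpos j).ne' (hbspos j).ne'] at this
          calc Real.log (b j) - Real.log (bstar j) ≤ b j / bstar j - 1 := this
            _ = (b j - bstar j) / bstar j := by
                rw [sub_div, div_self (hbspos j).ne']
        calc vbar j * (Real.log (b j) - Real.log (bstar j))
            ≤ vbar j * ((b j - bstar j) / bstar j) :=
              mul_le_mul_of_nonneg_left hlog h.le
          _ = vbar j / bstar j * (b j - bstar j) := by ring
    refine h1.trans ?_
    -- case analysis
    rcases le_or_gt (s * vbar j) (l / m) with hlo | hlo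
    · have hbs : bstar j = l / m := by
        rw [hbstar j, max_eq_right hlo, min_eq_left hLU.le]
      have hv : vbar j / bstar j ≤ 1 / s := by
        rw [hbs, div_le_div_iff₀ hL0 hs]
        nlinarith
      have hd : 0 ≤ b j - bstar j := by rw [hbs]; linarith [(hbc j).1]
      exact mul_le_mul_of_nonneg_right hv hd
    · rcases le_or_gt (2 / (m * μl)) (s * vbar j) with hhi | hhi
      · have hbs : bstar j = 2 / (m * μl) := by
          rw [hbstar j, min_eq_right]
          exact le_max_of_le_left hhi
        have hU0 : 0 < 2 / (m * μl) := hL0.trans hLU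
        have hv : 1 / s ≤ vbar j / bstar j := by
          rw [hbs, div_le_div_iff₀ hs hU0]
          nlinarith
        have hd : b j - bstar j ≤ 0 := by rw [hbs]; linarith [(hbc j).2]
        exact mul_le_mul_of_nonpos_right hv hd
      · have hbs : bstar j = s * vbar j := by
          rw [hbstar j, max_eq_left hlo.le, min_eq_left hhi.le]
        have hvpos : 0 < vbar j := by
          by_contra h
          push_neg at h
          have : vbar j = 0 := le_antisymm h (hv0 j)
          rw [this, mul_zero] at hlo
          linarith
        have : vbar j / bstar j = 1 / s := by
          rw [hbs]
          field_simp
        rw [this]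
  have hsumle : ∑ j, vbar j * (Real.log (b j) - Real.log (bstar j))
      ≤ ∑ j, (1/s) * (b j - bstar j) := Finset.sum_le_sum (fun j _ => key j)
  have hzero : ∑ j, (1/s) * (b j - bstar j) = 0 := by
    rw [← Finset.mul_sum, Finset.sum_sub_distrib, hbsum, hsum]
    ring
  rw [hzero] at hsumle
  have : ∑ j, vbar j * (Real.log (b j) - Real.log (bstar j))
      = ∑ j, -(vbar j * Real.log (bstar j)) - ∑ j, -(vbar j * Real.log (b j)) := by
    rw [← Finset.sum_sub_distrib]
    congr 1
    ext j
    ring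
  linarith [this ▸ hsumle]
end

section
/- Let v̄, b_i, b_k ∈ R^m be nonnegative vectors with ∑_j v̄_j = ∑_j b_{ij} = ∑_j b_{kj} = 1 and all entries of b_i, b_k in [b_min, b_max] with 0 < b_min ≤ b_max. Suppose there is s ∈ (0,1] such that, for each j, either b_{ij} = s·v̄_j, or (b_{ij} = b_min and s·v̄_j ≤ b_min). Then ∑_j v̄_j (log b_{ij} − log b_{kj}) ≥ D_KL(b_i‖b_k). -/
open Real Finset

/-- The fractional envy margin numerator dominates the KL divergence between
bid vectors. -/
theorem envy_margin_ge_kl (m : ℕ) (vbar bi bk : Fin m → ℝ)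
    (hv0 : ∀ j, 0 ≤ vbar j)
    (hv1 : ∑ j, vbar j = 1) (hbi1 : ∑ j, bi j = 1) (hbk1 : ∑ j, bk j = 1)
    (bmin bmax : ℝ) (hbmin : 0 < bmin) (hle : bmin ≤ bmax)
    (hbi : ∀ j, bi j ∈ Set.Icc bmin bmax) (hbk : ∀ j, bk j ∈ Set.Icc bmin bmax)
    (s : ℝ) (hs : s ∈ Set.Ioc (0 : ℝ) 1)
    (hform : ∀ j, bi j = s * vbar j ∨ (bi j = bmin ∧ s * vbar j ≤ bmin)) :
    ∑ j, vbar j * (Real.log (bi j) - Real.log (bk j)) ≥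
      ∑ j, bi j * (Real.log (bi j) - Real.log (bk j)) := by
  obtain ⟨hs0, hs1⟩ := hs
  have hbipos : ∀ j, 0 < bi j := fun j => lt_of_lt_of_le hbmin (hbi j).1
  have hbkpos : ∀ j, 0 < bk j := fun j => lt_of_lt_of_le hbmin (hbk j).1
  set K := ∑ j, bi j * (Real.log (bi j) - Real.log (bk j)) with hKdef
  -- KL nonnegativity
  have hK : 0 ≤ K := by
    have h1 : ∀ j, bi j * (Real.log (bk j) - Real.log (bi j)) ≤ bk j - bi j := by
      intro j
      have hlog : Real.log (bk j) - Real.log (bi j) ≤ bk j / bi j - 1 := by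
        have := Real.log_le_sub_one_of_pos (div_pos (hbkpos j) (hbipos j))
        rwa [Real.log_div (hbkpos j).ne' (hbipos j).ne'] at this
      calc bi j * (Real.log (bk j) - Real.log (bi j))
          ≤ bi j * (bk j / bi j - 1) :=
            mul_le_mul_of_nonneg_left hlog (hbipos j).le
        _ = bk j - bi j := by
            rw [mul_sub, mul_div_cancel₀ _ (hbipos j).ne', mul_one]
    have h2 : ∑ j, bi j * (Real.log (bk j) - Real.log (bi j)) ≤ 0 := by
      calc ∑ j, bi j * (Real.log (bk j) - Real.log (bi j))
          ≤ ∑ j, (bk j - bi j) := Finset.sum_le_sum fun j _ => h1 j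
        _ = 0 := by rw [Finset.sum_sub_distrib, hbk1, hbi1, sub_self]
    have : -K = ∑ j, bi j * (Real.log (bk j) - Real.log (bi j)) := by
      rw [hKdef, ← Finset.sum_neg_distrib]
      congr 1; funext j; ring
    linarith
  -- termwise: vbar j * L j ≥ (1/s) * (bi j * L j)
  have hterm : ∀ j, (1 / s) * (bi j * (Real.log (bi j) - Real.log (bk j))) ≤
      vbar j * (Real.log (bi j) - Real.log (bk j)) := by
    intro j
    rcases hform j with h | ⟨h1, h2⟩
    · have : 1 / s * (bi j * (Real.log (bi j) - Real.log (bk j)))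
          = vbar j * (Real.log (bi j) - Real.log (bk j)) := by
        rw [h]; field_simp
      exact this.le
    · have hLle : Real.log (bi j) - Real.log (bk j) ≤ 0 := by
        have : bi j ≤ bk j := h1 ▸ (hbk j).1
        have := Real.log_le_log (hbipos j) this
        linarith
      have hvle : vbar j ≤ 1 / s * bi j := by
        rw [div_mul_eq_mul_div, one_mul, le_div_iff₀ hs0, mul_comm]
        exact h2.trans_eq h1.symm
      calc 1 / s * (bi j * (Real.log (bi j) - Real.log (bk j)))
          = (1 / s * bi j) * (Real.log (bi j) - Real.log (bk j)) := by ring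
        _ ≤ vbar j * (Real.log (bi j) - Real.log (bk j)) :=
            mul_le_mul_of_nonpos_right hvle hLle
  have hsum : (1 / s) * K ≤ ∑ j, vbar j * (Real.log (bi j) - Real.log (bk j)) := by
    rw [hKdef, Finset.mul_sum]
    exact Finset.sum_le_sum fun j _ => hterm j
  have h1s : 1 ≤ 1 / s := by rw [le_div_iff₀ hs0]; linarith
  calc K = 1 * K := (one_mul K).symm
    _ ≤ (1 / s) * K := mul_le_mul_of_nonneg_right h1s hK
    _ ≤ _ := hsum
end
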